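/- Consider the extended finite-horizon LTV system on [0,T]: x'(t)=𝒜(t)x(t)+ℬ_w(t)w(t)+ℬ_d(t)d(t), z(t)=𝒞_z(t)x(t)+𝒟_{zw}(t)w(t)+𝒟_{zd}(t)d(t), e_I(t)=𝒞_I(t)x(t)+𝒟_{Iw}(t)w(t)+𝒟_{Id}(t)d(t), e_E(t)=𝒞_E(t)x(t). Let M:[0,T]→S^{n_z} be continuous, let ε>0, γ>0, and define Q:=𝒞_Iᵀ𝒞_I, S:=𝒞_Iᵀ[𝒟_{Iw} 𝒟_{Id}], R:=[𝒟_{Iw} 𝒟_{Id}]ᵀ[𝒟_{Iw} 𝒟_{Id}]−γ²·diag(0_{n_w}, I_{n_d}). Suppose there is a continuously differentiable symmetric P:[0,T]→S^{n} with P(T)−𝒞_E(T)ᵀ𝒞_E(T) positive semidefinite, such that for all t∈[0,T] the matrix [[P'+𝒜ᵀP+P𝒜, Pℬ],[ℬᵀP, 0]] + [[Q,S],[Sᵀ,R]] + [𝒞_z 𝒟_z]ᵀM[𝒞_z 𝒟_z] + εI is negative semidefinite, where ℬ:=[ℬ_w ℬ_d] and 𝒟_z:=[𝒟_{zw} 𝒟_{zd}].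 Then for all continuous inputs w:[0,T]→ℝ^{n_w} and d:[0,T]→ℝ^{n_d} and the trajectory with x(0)=0, if the integral quadratic constraint ∫₀ᵀ z(t)ᵀM(t)z(t) dt ≥ 0 holds, then ‖e_E(T)‖² + ∫₀ᵀ‖e_I(t)‖² dt ≤ (γ²−ε) ∫₀ᵀ‖d(t)‖² dt. -/

import Mathlib

/-!
Along a trajectory, `V(t) = x(t)ᵀ P(t) x(t)` is a storage function with `V(0) = 0`. Testing the
differential LMI on the vector `(x, w, d)` gives, after discarding `ε(‖x‖² + ‖w‖²) ≥ 0`, the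
dissipation inequality `V' ≤ (γ² - ε)‖d‖² - ‖e_I‖² - zᵀMz`. Integrating over `[0, T]`, the IQC
removes the `z`-term and the terminal condition gives `‖e_E(T)‖² ≤ V(T)`.
-/

open Matrix Set

/-- The matrix appearing in the robust-performance differential LMI:
`[[P' + 𝒜ᵀP + P𝒜, Pℬ],[ℬᵀP, 0]] + [[Q,S],[Sᵀ,R]] + [𝒞_z 𝒟_z]ᵀ M [𝒞_z 𝒟_z] + εI`. -/
noncomputable def dlmiRob {ι κ σ : Type*} [Fintype ι] [Fintype κ] [Fintype σ]
    [DecidableEq ι] [DecidableEq κ]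
    (P' P 𝒜 : Matrix ι ι ℝ) (ℬ : Matrix ι κ ℝ)
    (Q : Matrix ι ι ℝ) (S : Matrix ι κ ℝ) (R : Matrix κ κ ℝ)
    (Cz : Matrix σ ι ℝ) (Dz : Matrix σ κ ℝ) (M : Matrix σ σ ℝ) (ε : ℝ) :
    Matrix (ι ⊕ κ) (ι ⊕ κ) ℝ :=
  fromBlocks (P' + 𝒜ᵀ * P + P * 𝒜) (P * ℬ) (ℬᵀ * P) 0
    + fromBlocks Q S Sᵀ R
    + (fromCols Cz Dz)ᵀ * M * (fromCols Cz Dz)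
    + ε • 1

section Continuity

variable {α R m n : Type*} [TopologicalSpace α] [TopologicalSpace R] {s : Set α}

@[fun_prop]
theorem continuousOn_matrix {f : α → Matrix m n R}
    (h : ∀ i j, ContinuousOn (fun a => f a i j) s) : ContinuousOn f s :=
  continuousOn_pi.2 fun i => continuousOn_pi.2 (h i)

@[fun_prop]
protected theorem ContinuousOn.dotProduct [Fintype n] [Mul R] [AddCommMonoid R] [ContinuousAdd R]
    [ContinuousMul R] {A B : α → n → R} (hA : ContinuousOn A s) (hB : ContinuousOn B s) :
    ContinuousOn (fun a => A a ⬝ᵥ B a) s := by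
  rw [continuousOn_iff_continuous_domRestrict] at *
  exact hA.dotProduct hB

@[fun_prop]
theorem ContinuousOn.matrix_mulVec [Fintype n] [NonUnitalNonAssocSemiring R] [ContinuousAdd R]
    [ContinuousMul R] {A : α → Matrix m n R} {v : α → n → R} (hA : ContinuousOn A s)
    (hv : ContinuousOn v s) : ContinuousOn (fun a => A a *ᵥ v a) s := by
  rw [continuousOn_iff_continuous_domRestrict] at *
  exact hA.matrix_mulVec hv

end Continuity

section Derivatives

variable {ι κ : Type*} [Fintype ι] {t : ℝ}

theorem hasDerivAt_dotProduct {f g : ℝ → ι → ℝ} {f' g' : ι → ℝ}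
    (hf : ∀ i, HasDerivAt (fun u => f u i) (f' i) t)
    (hg : ∀ i, HasDerivAt (fun u => g u i) (g' i) t) :
    HasDerivAt (fun u => f u ⬝ᵥ g u) (f' ⬝ᵥ g t + f t ⬝ᵥ g') t := by
  simp only [dotProduct, ← Finset.sum_add_distrib]
  exact HasDerivAt.fun_sum fun i _ => (hf i).mul (hg i)

theorem hasDerivAt_mulVec_apply {A : ℝ → Matrix κ ι ℝ} {A' : Matrix κ ι ℝ} {v : ℝ → ι → ℝ}
    {v' : ι → ℝ} (hA : ∀ i j, HasDerivAt (fun u => A u i j) (A' i j) t)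
    (hv : ∀ j, HasDerivAt (fun u => v u j) (v' j) t) (i : κ) :
    HasDerivAt (fun u => (A u *ᵥ v u) i) ((A' *ᵥ v t + A t *ᵥ v') i) t :=
  hasDerivAt_dotProduct (hA i) hv

end Derivatives

theorem dlmiRob_quadForm {ι ιw ιd ιz ιI : Type*}
    [Fintype ι] [Fintype ιw] [Fintype ιd] [Fintype ιz] [Fintype ιI]
    [DecidableEq ι] [DecidableEq ιw] [DecidableEq ιd]
    (P' P 𝒜 : Matrix ι ι ℝ) (Bw : Matrix ι ιw ℝ) (Bd : Matrix ι ιd ℝ)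
    (CI : Matrix ιI ι ℝ) (DIw : Matrix ιI ιw ℝ) (DId : Matrix ιI ιd ℝ)
    (Cz : Matrix ιz ι ℝ) (Dzw : Matrix ιz ιw ℝ) (Dzd : Matrix ιz ιd ℝ)
    (M : Matrix ιz ιz ℝ) (ε γ : ℝ) (x : ι → ℝ) (w : ιw → ℝ) (d : ιd → ℝ) :
    Sum.elim x (Sum.elim w d) ⬝ᵥ
      (dlmiRob P' P 𝒜 (fromCols Bw Bd) (CIᵀ * CI) (CIᵀ * fromCols DIw DId)
        ((fromCols DIw DId)ᵀ * fromCols DIw DId -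
          γ ^ 2 • fromBlocks (0 : Matrix ιw ιw ℝ) 0 0 (1 : Matrix ιd ιd ℝ))
        Cz (fromCols Dzw Dzd) M ε *ᵥ Sum.elim x (Sum.elim w d))
    = (𝒜 *ᵥ x + Bw *ᵥ w + Bd *ᵥ d) ⬝ᵥ (P *ᵥ x)
        + x ⬝ᵥ (P' *ᵥ x + P *ᵥ (𝒜 *ᵥ x + Bw *ᵥ w + Bd *ᵥ d))
      + (CI *ᵥ x + DIw *ᵥ w + DId *ᵥ d) ⬝ᵥ (CI *ᵥ x + DIw *ᵥ w + DId *ᵥ d)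
      - γ ^ 2 * (d ⬝ᵥ d)
      + (Cz *ᵥ x + Dzw *ᵥ w + Dzd *ᵥ d) ⬝ᵥ (M *ᵥ (Cz *ᵥ x + Dzw *ᵥ w + Dzd *ᵥ d))
      + ε * (x ⬝ᵥ x + w ⬝ᵥ w + d ⬝ᵥ d) := by
  simp only [dlmiRob, add_mulVec, dotProduct_add, sub_mulVec, dotProduct_sub, ← mulVec_mulVec,
    fromBlocks_mulVec, fromCols_mulVec_sumElim, transpose_fromCols, fromRows_mulVec,
    sumElim_dotProduct_sumElim, smul_mulVec, one_mulVec, zero_mulVec, dotProduct_smul,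
    smul_eq_mul, dotProduct_transpose_mulVec, mulVec_add, add_dotProduct, dotProduct_zero,
    add_zero, zero_add, Sum.elim_comp_inl, Sum.elim_comp_inr]
  -- `simp` uses the commutativity lemma for ordered rewriting, so each bilinear term ends up
  -- in one orientation and `ring` sees matching atoms.
  simp only [dotProduct_comm]
  ring

theorem storage_rate_le_of_dlmiRob_nonpos {ι ιw ιd ιz ιI : Type*}
    [Fintype ι] [Fintype ιw] [Fintype ιd] [Fintype ιz] [Fintype ιI]
    [DecidableEq ι] [DecidableEq ιw] [DecidableEq ιd]
    {P' P 𝒜 : Matrix ι ι ℝ} {Bw : Matrix ι ιw ℝ} {Bd : Matrix ι ιd ℝ}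
    {CI : Matrix ιI ι ℝ} {DIw : Matrix ιI ιw ℝ} {DId : Matrix ιI ιd ℝ}
    {Cz : Matrix ιz ι ℝ} {Dzw : Matrix ιz ιw ℝ} {Dzd : Matrix ιz ιd ℝ}
    {M : Matrix ιz ιz ℝ} {ε γ : ℝ} {x : ι → ℝ} {w : ιw → ℝ} {d : ιd → ℝ} (hε : 0 ≤ ε)
    (h : Sum.elim x (Sum.elim w d) ⬝ᵥ
      (dlmiRob P' P 𝒜 (fromCols Bw Bd) (CIᵀ * CI) (CIᵀ * fromCols DIw DId)
        ((fromCols DIw DId)ᵀ * fromCols DIw DId -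
          γ ^ 2 • fromBlocks (0 : Matrix ιw ιw ℝ) 0 0 (1 : Matrix ιd ιd ℝ))
        Cz (fromCols Dzw Dzd) M ε *ᵥ Sum.elim x (Sum.elim w d)) ≤ 0) :
    (𝒜 *ᵥ x + Bw *ᵥ w + Bd *ᵥ d) ⬝ᵥ (P *ᵥ x)
        + x ⬝ᵥ (P' *ᵥ x + P *ᵥ (𝒜 *ᵥ x + Bw *ᵥ w + Bd *ᵥ d)) ≤
      (γ ^ 2 - ε) * (d ⬝ᵥ d)
        - (CI *ᵥ x + DIw *ᵥ w + DId *ᵥ d) ⬝ᵥ (CI *ᵥ x + DIw *ᵥ w + DId *ᵥ d)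
        - (Cz *ᵥ x + Dzw *ᵥ w + Dzd *ᵥ d) ⬝ᵥ (M *ᵥ (Cz *ᵥ x + Dzw *ᵥ w + Dzd *ᵥ d)) := by
  rw [dlmiRob_quadForm] at h
  have hxw : 0 ≤ ε * (x ⬝ᵥ x + w ⬝ᵥ w) := mul_nonneg hε <| add_nonneg
    (Finset.sum_nonneg fun i _ => mul_self_nonneg _) (Finset.sum_nonneg fun i _ => mul_self_nonneg _)
  linarith

theorem dissipation_inequality {V V' gI gd gz : ℝ → ℝ} {a b c : ℝ} (hab : a ≤ b)
    (hV : ∀ t ∈ Icc a b, HasDerivAt V (V' t) t) (hgI : ContinuousOn gI (Icc a b))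
    (hgd : ContinuousOn gd (Icc a b)) (hgz : ContinuousOn gz (Icc a b))
    (hV' : ∀ t ∈ Icc a b, V' t ≤ c * gd t - gI t - gz t) :
    V b - V a + (∫ t in a..b, gI t) + (∫ t in a..b, gz t) ≤ c * ∫ t in a..b, gd t := by
  have h := intervalIntegral.sub_le_integral_of_hasDeriv_right_of_le hab
    (fun t ht => (hV t ht).continuousAt.continuousWithinAt)
    (fun t ht => (hV t (Ioo_subset_Icc_self ht)).hasDerivWithinAt)
    (by fun_prop : ContinuousOn (fun t => c * gd t - gI t - gz t) (Icc a b)).integrableOn_Icc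
    (fun t ht => hV' t (Ioo_subset_Icc_self ht))
  have hgdc : IntervalIntegrable (fun t => c * gd t) MeasureTheory.volume a b :=
    (hgd.intervalIntegrable_of_Icc hab).const_mul c
  have hgIi : IntervalIntegrable gI MeasureTheory.volume a b := hgI.intervalIntegrable_of_Icc hab
  rw [intervalIntegral.integral_sub (hgdc.sub hgIi) (hgz.intervalIntegrable_of_Icc hab),
    intervalIntegral.integral_sub hgdc hgIi,
    intervalIntegral.integral_const_mul] at h
  linarith

theorem dlmi_implies_robust_performance_general
    {n nw nd nz nI nE : ℕ} {T : ℝ} (hT : 0 < T)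
    (𝒜 : ℝ → Matrix (Fin n) (Fin n) ℝ)
    (Bw : ℝ → Matrix (Fin n) (Fin nw) ℝ)
    (Bd : ℝ → Matrix (Fin n) (Fin nd) ℝ)
    (Cz : ℝ → Matrix (Fin nz) (Fin n) ℝ)
    (Dzw : ℝ → Matrix (Fin nz) (Fin nw) ℝ)
    (Dzd : ℝ → Matrix (Fin nz) (Fin nd) ℝ)
    (CI : ℝ → Matrix (Fin nI) (Fin n) ℝ)
    (DIw : ℝ → Matrix (Fin nI) (Fin nw) ℝ)
    (DId : ℝ → Matrix (Fin nI) (Fin nd) ℝ)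
    (CE : ℝ → Matrix (Fin nE) (Fin n) ℝ)
    (hCz : ∀ i j, ContinuousOn (fun t => Cz t i j) (Icc 0 T))
    (hDzw : ∀ i j, ContinuousOn (fun t => Dzw t i j) (Icc 0 T))
    (hDzd : ∀ i j, ContinuousOn (fun t => Dzd t i j) (Icc 0 T))
    (hCI : ∀ i j, ContinuousOn (fun t => CI t i j) (Icc 0 T))
    (hDIw : ∀ i j, ContinuousOn (fun t => DIw t i j) (Icc 0 T))
    (hDId : ∀ i j, ContinuousOn (fun t => DId t i j) (Icc 0 T))
    (M : ℝ → Matrix (Fin nz) (Fin nz) ℝ)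
    (hMcont : ∀ i j, ContinuousOn (fun t => M t i j) (Icc 0 T))
    (ε γ : ℝ) (hε : 0 < ε)
    (P P' : ℝ → Matrix (Fin n) (Fin n) ℝ)
    (hPderiv : ∀ t ∈ Icc (0:ℝ) T, ∀ i j, HasDerivAt (fun s => P s i j) (P' t i j) t)
    -- terminal condition: P(T) - 𝒞_E(T)ᵀ𝒞_E(T) ⪰ 0
    (hPT : ∀ v : Fin n → ℝ, 0 ≤ v ⬝ᵥ ((P T - (CE T)ᵀ * CE T) *ᵥ v))
    -- the differential LMI is negative semidefinite on [0,T]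
    (hDLMI : ∀ t ∈ Icc (0:ℝ) T, ∀ v : (Fin n ⊕ (Fin nw ⊕ Fin nd)) → ℝ,
      v ⬝ᵥ ((dlmiRob (P' t) (P t) (𝒜 t) (fromCols (Bw t) (Bd t))
        ((CI t)ᵀ * CI t)
        ((CI t)ᵀ * fromCols (DIw t) (DId t))
        ((fromCols (DIw t) (DId t))ᵀ * fromCols (DIw t) (DId t) -
          γ ^ 2 • fromBlocks (0 : Matrix (Fin nw) (Fin nw) ℝ) 0 0
            (1 : Matrix (Fin nd) (Fin nd) ℝ))
        (Cz t) (fromCols (Dzw t) (Dzd t)) (M t) ε) *ᵥ v) ≤ 0) :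
    ∀ (w : ℝ → Fin nw → ℝ) (d : ℝ → Fin nd → ℝ) (x : ℝ → Fin n → ℝ),
      (∀ i, ContinuousOn (fun t => w t i) (Icc 0 T)) →
      (∀ i, ContinuousOn (fun t => d t i) (Icc 0 T)) →
      x 0 = 0 →
      (∀ t ∈ Icc (0:ℝ) T, ∀ i,
        HasDerivAt (fun s => x s i)
          ((𝒜 t *ᵥ x t + Bw t *ᵥ w t + Bd t *ᵥ d t) i) t) →
      -- the IQC on the filter output z
      (0 ≤ ∫ t in (0:ℝ)..T,
        (Cz t *ᵥ x t + Dzw t *ᵥ w t + Dzd t *ᵥ d t) ⬝ᵥ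
          (M t *ᵥ (Cz t *ᵥ x t + Dzw t *ᵥ w t + Dzd t *ᵥ d t))) →
      (CE T *ᵥ x T) ⬝ᵥ (CE T *ᵥ x T) +
        (∫ t in (0:ℝ)..T,
          (CI t *ᵥ x t + DIw t *ᵥ w t + DId t *ᵥ d t) ⬝ᵥ
            (CI t *ᵥ x t + DIw t *ᵥ w t + DId t *ᵥ d t)) ≤
      (γ ^ 2 - ε) * ∫ t in (0:ℝ)..T, (d t) ⬝ᵥ (d t) := by
  intro w d x hw hd hx0 hx hIQC
  have hxc : ContinuousOn x (Icc 0 T) :=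
    continuousOn_pi.2 fun i t ht => (hx t ht i).continuousAt.continuousWithinAt
  have hwc := continuousOn_pi.2 hw
  have hdc := continuousOn_pi.2 hd
  have hgd : ContinuousOn (fun t => d t ⬝ᵥ d t) (Icc 0 T) := by fun_prop
  have hgI : ContinuousOn (fun t => (CI t *ᵥ x t + DIw t *ᵥ w t + DId t *ᵥ d t) ⬝ᵥ
      (CI t *ᵥ x t + DIw t *ᵥ w t + DId t *ᵥ d t)) (Icc 0 T) := by fun_prop
  have hgz : ContinuousOn (fun t => (Cz t *ᵥ x t + Dzw t *ᵥ w t + Dzd t *ᵥ d t) ⬝ᵥ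
      (M t *ᵥ (Cz t *ᵥ x t + Dzw t *ᵥ w t + Dzd t *ᵥ d t))) (Icc 0 T) := by fun_prop
  have hV : ∀ t ∈ Icc (0:ℝ) T, HasDerivAt (fun u => x u ⬝ᵥ (P u *ᵥ x u)) _ t := fun t ht =>
    hasDerivAt_dotProduct (hx t ht) (hasDerivAt_mulVec_apply (hPderiv t ht) (hx t ht))
  have hterm : (CE T *ᵥ x T) ⬝ᵥ (CE T *ᵥ x T) ≤ x T ⬝ᵥ (P T *ᵥ x T) := by
    have h := hPT (x T)
    rw [sub_mulVec, dotProduct_sub, ← mulVec_mulVec, dotProduct_transpose_mulVec] at h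
    linarith
  have hdiss := dissipation_inequality hT.le hV hgI hgd hgz
    fun t ht => storage_rate_le_of_dlmiRob_nonpos hε.le (hDLMI t ht _)
  simp only [hx0, mulVec_zero, zero_dotProduct, sub_zero] at hdiss
  linarith

/-- IQC robust-performance theorem. If the differential LMI holds with
`P(T) ⪰ 𝒞_E(T)ᵀ𝒞_E(T)`, then every trajectory with `x(0)=0` whose filter output `z`
satisfies the IQC `∫ zᵀMz ≥ 0` obeys
`‖e_E(T)‖² + ∫‖e_I‖² ≤ (γ²-ε)∫‖d‖²`. -/
theorem dlmi_implies_robust_performance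
    {n nw nd nz nI nE : ℕ} {T : ℝ} (hT : 0 < T)
    (𝒜 : ℝ → Matrix (Fin n) (Fin n) ℝ)
    (Bw : ℝ → Matrix (Fin n) (Fin nw) ℝ)
    (Bd : ℝ → Matrix (Fin n) (Fin nd) ℝ)
    (Cz : ℝ → Matrix (Fin nz) (Fin n) ℝ)
    (Dzw : ℝ → Matrix (Fin nz) (Fin nw) ℝ)
    (Dzd : ℝ → Matrix (Fin nz) (Fin nd) ℝ)
    (CI : ℝ → Matrix (Fin nI) (Fin n) ℝ)
    (DIw : ℝ → Matrix (Fin nI) (Fin nw) ℝ)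
    (DId : ℝ → Matrix (Fin nI) (Fin nd) ℝ)
    (CE : ℝ → Matrix (Fin nE) (Fin n) ℝ)
    (h𝒜 : ∀ i j, ContinuousOn (fun t => 𝒜 t i j) (Icc 0 T))
    (hBw : ∀ i j, ContinuousOn (fun t => Bw t i j) (Icc 0 T))
    (hBd : ∀ i j, ContinuousOn (fun t => Bd t i j) (Icc 0 T))
    (hCz : ∀ i j, ContinuousOn (fun t => Cz t i j) (Icc 0 T))
    (hDzw : ∀ i j, ContinuousOn (fun t => Dzw t i j) (Icc 0 T))
    (hDzd : ∀ i j, ContinuousOn (fun t => Dzd t i j) (Icc 0 T))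
    (hCI : ∀ i j, ContinuousOn (fun t => CI t i j) (Icc 0 T))
    (hDIw : ∀ i j, ContinuousOn (fun t => DIw t i j) (Icc 0 T))
    (hDId : ∀ i j, ContinuousOn (fun t => DId t i j) (Icc 0 T))
    (hCE : ∀ i j, ContinuousOn (fun t => CE t i j) (Icc 0 T))
    (M : ℝ → Matrix (Fin nz) (Fin nz) ℝ)
    (hMsym : ∀ t ∈ Icc (0:ℝ) T, (M t)ᵀ = M t)
    (hMcont : ∀ i j, ContinuousOn (fun t => M t i j) (Icc 0 T))
    (ε γ : ℝ) (hε : 0 < ε) (hγ : 0 < γ)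
    (P P' : ℝ → Matrix (Fin n) (Fin n) ℝ)
    (hPsym : ∀ t ∈ Icc (0:ℝ) T, (P t)ᵀ = P t)
    (hPderiv : ∀ t ∈ Icc (0:ℝ) T, ∀ i j, HasDerivAt (fun s => P s i j) (P' t i j) t)
    (hP'cont : ∀ i j, ContinuousOn (fun t => P' t i j) (Icc 0 T))
    -- terminal condition: P(T) - 𝒞_E(T)ᵀ𝒞_E(T) ⪰ 0
    (hPT : ∀ v : Fin n → ℝ, 0 ≤ v ⬝ᵥ ((P T - (CE T)ᵀ * CE T) *ᵥ v))
    -- the differential LMI is negative semidefinite on [0,T]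
    (hDLMI : ∀ t ∈ Icc (0:ℝ) T, ∀ v : (Fin n ⊕ (Fin nw ⊕ Fin nd)) → ℝ,
      v ⬝ᵥ ((dlmiRob (P' t) (P t) (𝒜 t) (fromCols (Bw t) (Bd t))
        ((CI t)ᵀ * CI t)
        ((CI t)ᵀ * fromCols (DIw t) (DId t))
        ((fromCols (DIw t) (DId t))ᵀ * fromCols (DIw t) (DId t) -
          γ ^ 2 • fromBlocks (0 : Matrix (Fin nw) (Fin nw) ℝ) 0 0
            (1 : Matrix (Fin nd) (Fin nd) ℝ))
        (Cz t) (fromCols (Dzw t) (Dzd t)) (M t) ε) *ᵥ v) ≤ 0) :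
    ∀ (w : ℝ → Fin nw → ℝ) (d : ℝ → Fin nd → ℝ) (x : ℝ → Fin n → ℝ),
      (∀ i, ContinuousOn (fun t => w t i) (Icc 0 T)) →
      (∀ i, ContinuousOn (fun t => d t i) (Icc 0 T)) →
      x 0 = 0 →
      (∀ t ∈ Icc (0:ℝ) T, ∀ i,
        HasDerivAt (fun s => x s i)
          ((𝒜 t *ᵥ x t + Bw t *ᵥ w t + Bd t *ᵥ d t) i) t) →
      -- the IQC on the filter output z
      (0 ≤ ∫ t in (0:ℝ)..T,
        (Cz t *ᵥ x t + Dzw t *ᵥ w t + Dzd t *ᵥ d t) ⬝ᵥ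
          (M t *ᵥ (Cz t *ᵥ x t + Dzw t *ᵥ w t + Dzd t *ᵥ d t))) →
      (CE T *ᵥ x T) ⬝ᵥ (CE T *ᵥ x T) +
        (∫ t in (0:ℝ)..T,
          (CI t *ᵥ x t + DIw t *ᵥ w t + DId t *ᵥ d t) ⬝ᵥ
            (CI t *ᵥ x t + DIw t *ᵥ w t + DId t *ᵥ d t)) ≤
      (γ ^ 2 - ε) * ∫ t in (0:ℝ)..T, (d t) ⬝ᵥ (d t) :=
  dlmi_implies_robust_performance_general hT 𝒜 Bw Bd Cz Dzw Dzd CI DIw DId CE hCz hDzw hDzd hCI hDIw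
    hDId M hMcont ε γ hε P P' hPderiv hPT hDLMI
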